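/- Let ρ = |φ⟩⟨φ| with Schmidt decomposition |φ⟩ = Σ_k λ_k |u_k⟩⊗|v_k⟩ on H_A ⊗ H_B, with {|u_k⟩}, {|v_k⟩} orthonormal, λ_k ≥ 0, Σ λ_k² = 1. Define, for basis vectors p, q of an orthonormal basis of H_A, the operators ρ_{qp} = Tr_A[(|p⟩⟨q| ⊗ I_B) ρ] on H_B. Then Σ_{p,q,m,n} Tr[ρ_{qp} ρ_{nm}] · Tr[ρ_{pq}] · Tr[ρ_{mn}] = Σ_i λ_i⁸. -/

import Mathlib

/-!
With `T = Tr_B ρ` the reduced state on `A`, one has `Tr ρ_{pq} = T q p` and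
`Tr [ρ_{qp} ρ_{nm}] = T q n * T m p`, so the quadruple sum is `Tr T⁴`. The Schmidt
decomposition gives `T = W diag(λ²) Wᴴ` with `Wᴴ W = 1`, hence `Tr T⁴ = Tr diag(λ⁸) = ∑ λ⁸`.
-/

open Matrix Kronecker BigOperators

/-- Outer product `|psi><psi|`. -/
noncomputable def outer {n : Type*} [Fintype n] (v : n → ℂ) : Matrix n n ℂ :=
  Matrix.vecMulVec v (star v)

/-- Partial trace over the second (B) factor. -/
noncomputable def ptB {a b : Type*} [Fintype a] [Fintype b]
    (M : Matrix (a × b) (a × b) ℂ) : Matrix a a ℂ :=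
  fun i j => ∑ k, M (i, k) (j, k)

/-- Partial trace over the first (A) factor. -/
noncomputable def ptA {a b : Type*} [Fintype a] [Fintype b]
    (M : Matrix (a × b) (a × b) ℂ) : Matrix b b ℂ :=
  fun i j => ∑ k, M (k, i) (k, j)

/-- `v` is a unit vector. -/
def IsUnitVec {n : Type*} [Fintype n] (v : n → ℂ) : Prop :=
  ∑ i, Complex.normSq (v i) = 1

section PartialTrace

variable {a b : Type*} [Fintype a] [Fintype b]

lemma ptB_outer (φ : a × b → ℂ) :
    ptB (outer φ) = of (Function.curry φ) * (of (Function.curry φ))ᴴ := by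
  ext i j
  simp [ptB, outer, mul_apply, vecMulVec_apply]

lemma ptB_outer_eq_of_schmidt {ι : Type*} [Fintype ι] [DecidableEq ι] (l : ι → ℝ)
    (u : ι → a → ℂ) (v : ι → b → ℂ)
    (hv : ∀ i j, ∑ y, star (v i y) * v j y = if i = j then (1 : ℂ) else 0)
    (φ : a × b → ℂ) (hφ : ∀ x y, φ (x, y) = ∑ k, (l k : ℂ) * u k x * v k y) :
    ptB (outer φ) = (of u)ᵀ * diagonal (fun k => (l k : ℂ) ^ 2) * (of u)ᵀᴴ := by
  have hΦ : of (Function.curry φ) = (of u)ᵀ * diagonal (fun k => (l k : ℂ)) * of v := by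
    ext x y
    simp [hφ, mul_apply, diagonal_apply, mul_comm]
  have hV : of v * (of v)ᴴ = 1 := by
    ext i j
    simpa [mul_apply, one_apply, mul_comm, eq_comm] using hv j i
  have hD : (diagonal fun k => (l k : ℂ))ᴴ = diagonal fun k => (l k : ℂ) := by
    simp [diagonal_conjTranspose]
  rw [ptB_outer, hΦ, conjTranspose_mul, conjTranspose_mul, hD]
  calc _ = (of u)ᵀ * diagonal (fun k => (l k : ℂ)) * (of v * (of v)ᴴ) *
          diagonal (fun k => (l k : ℂ)) * (of u)ᵀᴴ := by
        simp only [Matrix.mul_assoc]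
    _ = _ := by
        rw [hV, Matrix.mul_one, Matrix.mul_assoc (of u)ᵀ, diagonal_mul_diagonal]
        simp only [sq]

variable [DecidableEq a] [DecidableEq b]

lemma ptA_single_kronecker_one_mul_outer_apply (φ : a × b → ℂ) (p q : a) (i j : b) :
    ptA ((single p q (1 : ℂ) ⊗ₖ (1 : Matrix b b ℂ)) * outer φ) i j
      = φ (q, i) * star (φ (p, j)) := by
  simp [ptA, mul_apply, outer, vecMulVec_apply, kroneckerMap_apply, single, one_apply,
    Fintype.sum_prod_type, ite_and]

lemma trace_ptA_single_kronecker_one_mul_outer (φ : a × b → ℂ) (p q : a) :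
    (ptA ((single p q (1 : ℂ) ⊗ₖ (1 : Matrix b b ℂ)) * outer φ)).trace
      = ptB (outer φ) q p := by
  simp only [trace, diag, ptA_single_kronecker_one_mul_outer_apply]
  simp [ptB, outer, vecMulVec_apply]

lemma trace_ptA_single_kronecker_one_mul_outer_mul (φ : a × b → ℂ) (p q m n : a) :
    (ptA ((single p q (1 : ℂ) ⊗ₖ (1 : Matrix b b ℂ)) * outer φ) *
        ptA ((single n m (1 : ℂ) ⊗ₖ (1 : Matrix b b ℂ)) * outer φ)).trace
      = ptB (outer φ) q n * ptB (outer φ) m p := by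
  simp only [trace, diag, mul_apply, ptA_single_kronecker_one_mul_outer_apply]
  simp only [ptB, outer, vecMulVec_apply, Pi.star_apply, Finset.sum_mul_sum]
  exact Finset.sum_congr rfl fun i _ => Finset.sum_congr rfl fun j _ => by ring

end PartialTrace

section Trace

variable {n R : Type*} [Fintype n] [DecidableEq n] [CommSemiring R]

lemma trace_pow_four_eq_sum (M : Matrix n n R) :
    ∑ p, ∑ q, ∑ m, ∑ k, M q k * M m p * M p q * M k m = (M ^ 4).trace := by
  have hM : M ^ 4 = (M * M) * (M * M) := by noncomm_ring
  simp only [hM, trace, diag, mul_apply, Finset.sum_mul_sum]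
  refine Finset.sum_congr rfl fun p _ => ?_
  calc ∑ q, ∑ m, ∑ k, M q k * M m p * M p q * M k m
      = ∑ q, ∑ k, ∑ m, M p q * M q k * (M k m * M m p) :=
        Finset.sum_congr rfl fun q _ => Finset.sum_comm.trans
          (Finset.sum_congr rfl fun k _ => Finset.sum_congr rfl fun m _ => by ring)
    _ = _ := Finset.sum_comm

lemma trace_pow_succ_conj_of_mul_eq_one {k : Type*} [Fintype k] [DecidableEq k]
    (W : Matrix n k R) (W' : Matrix k n R) (hW : W' * W = 1) (E : Matrix k k R) (j : ℕ) :
    ((W * E * W') ^ (j + 1)).trace = (E ^ (j + 1)).trace := by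
  have hpow : (W * E * W') ^ (j + 1) = W * E ^ (j + 1) * W' := by
    induction j with
    | zero => simp
    | succ j ih =>
      rw [pow_succ, ih, pow_succ E (j + 1)]
      calc W * E ^ (j + 1) * W' * (W * E * W') = W * E ^ (j + 1) * (W' * W) * E * W' := by
            simp only [Matrix.mul_assoc]
        _ = W * (E ^ (j + 1) * E) * W' := by rw [hW, Matrix.mul_one, Matrix.mul_assoc W]
  rw [hpow, trace_mul_cycle, hW, Matrix.one_mul]

end Trace

theorem stmt_13_general (dA dB r : ℕ)
    (l : Fin r → ℝ)
    (u : Fin r → Fin dA → ℂ) (v : Fin r → Fin dB → ℂ)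
    (hu : ∀ i j, ∑ a, star (u i a) * u j a = if i = j then (1 : ℂ) else 0)
    (hv : ∀ i j, ∑ b, star (v i b) * v j b = if i = j then (1 : ℂ) else 0)
    (φ : Fin dA × Fin dB → ℂ)
    (hφ : ∀ a b, φ (a, b) = ∑ k, (l k : ℂ) * u k a * v k b) :
    ∑ p : Fin dA, ∑ q : Fin dA, ∑ m : Fin dA, ∑ nn : Fin dA,
      (ptA ((Matrix.single p q (1 : ℂ) ⊗ₖ (1 : Matrix (Fin dB) (Fin dB) ℂ)) * outer φ) *
        ptA ((Matrix.single nn m (1 : ℂ) ⊗ₖ (1 : Matrix (Fin dB) (Fin dB) ℂ)) * outer φ)).trace *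
      (ptA ((Matrix.single q p (1 : ℂ) ⊗ₖ (1 : Matrix (Fin dB) (Fin dB) ℂ)) * outer φ)).trace *
      (ptA ((Matrix.single m nn (1 : ℂ) ⊗ₖ (1 : Matrix (Fin dB) (Fin dB) ℂ)) * outer φ)).trace =
      ∑ i, (((l i) ^ 8 : ℝ) : ℂ) := by
  have hU : (of u)ᵀᴴ * (of u)ᵀ = 1 := by
    ext i j
    simpa [mul_apply, one_apply] using hu i j
  simp only [trace_ptA_single_kronecker_one_mul_outer_mul, trace_ptA_single_kronecker_one_mul_outer,
    trace_pow_four_eq_sum, ptB_outer_eq_of_schmidt l u v hv φ hφ]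
  rw [trace_pow_succ_conj_of_mul_eq_one _ _ hU _ 3, diagonal_pow, trace_diagonal]
  push_cast
  simp only [Pi.pow_apply, ← pow_mul]

/-- An eighth-moment identity in the Schmidt coefficients. -/
theorem stmt_13 (dA dB r : ℕ)
    (l : Fin r → ℝ) (hl : ∀ k, 0 ≤ l k) (hl2 : ∑ k, (l k) ^ 2 = 1)
    (u : Fin r → Fin dA → ℂ) (v : Fin r → Fin dB → ℂ)
    (hu : ∀ i j, ∑ a, star (u i a) * u j a = if i = j then (1 : ℂ) else 0)
    (hv : ∀ i j, ∑ b, star (v i b) * v j b = if i = j then (1 : ℂ) else 0)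
    (φ : Fin dA × Fin dB → ℂ)
    (hφ : ∀ a b, φ (a, b) = ∑ k, (l k : ℂ) * u k a * v k b) :
    ∑ p : Fin dA, ∑ q : Fin dA, ∑ m : Fin dA, ∑ nn : Fin dA,
      (ptA ((Matrix.single p q (1 : ℂ) ⊗ₖ (1 : Matrix (Fin dB) (Fin dB) ℂ)) * outer φ) *
        ptA ((Matrix.single nn m (1 : ℂ) ⊗ₖ (1 : Matrix (Fin dB) (Fin dB) ℂ)) * outer φ)).trace *
      (ptA ((Matrix.single q p (1 : ℂ) ⊗ₖ (1 : Matrix (Fin dB) (Fin dB) ℂ)) * outer φ)).trace *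
      (ptA ((Matrix.single m nn (1 : ℂ) ⊗ₖ (1 : Matrix (Fin dB) (Fin dB) ℂ)) * outer φ)).trace =
      ∑ i, (((l i) ^ 8 : ℝ) : ℂ) :=
  stmt_13_general dA dB r l u v hu hv φ hφ
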